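/- arXiv:2605.01508 — 4 statements merged into one kernel-verified Lean document; each statement's English description precedes it below -/
import Mathlib

section
/- For any code C ⊆ {0,1}^m, the number of codewords satisfies |C| ≤ (m+1)^{NRD(C)}. -/
namespace Paper

/-- A chain of length `ℓ` in a code `C ⊆ {0,1}^m`. -/
def HasChain {m : ℕ} (C : Set (Fin m → Bool)) (ℓ : ℕ) : Prop :=
  ∃ (a : Fin ℓ → Fin m) (c : Fin ℓ → (Fin m → Bool)),
    Function.Injective a ∧ Function.Injective c ∧ (∀ i, c i ∈ C) ∧
    (∀ i, c i (a i) = true) ∧ (∀ i j : Fin ℓ, i < j → c i (a j) = false)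

/-- The chain length of a code. -/
noncomputable def CL {m : ℕ} (C : Set (Fin m → Bool)) : ℕ := sSup {ℓ | HasChain C ℓ}

/-- The support of a code. -/
def Supp {m : ℕ} (C : Set (Fin m → Bool)) : Set (Fin m) := {i | ∃ c ∈ C, c i = true}

/-- Hamming weight. -/
def wt {m : ℕ} (c : Fin m → Bool) : ℕ := (Finset.univ.filter fun i => c i = true).card

open Classical in
/-- Zero out the coordinates outside `S`. -/
noncomputable def mask {m : ℕ} (S : Set (Fin m)) (c : Fin m → Bool) : Fin m → Bool :=
  fun i => if i ∈ S then c i else false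

/-- Restriction of a code to a coordinate set `S`. -/
noncomputable def restrict {m : ℕ} (C : Set (Fin m → Bool)) (S : Set (Fin m)) :
    Set (Fin m → Bool) := mask S '' C

/-- Non-redundancy of a code. -/
noncomputable def NRD {m : ℕ} (C : Set (Fin m → Bool)) : ℕ :=
  sSup {k | ∃ S : Finset (Fin m), S.card = k ∧
    ∀ j ∈ S, ∃ c ∈ C, c j = true ∧ ∀ i ∈ S, i ≠ j → c i = false}

/-- The density `Φ(C)` of a finite code. -/
noncomputable def density {m : ℕ} (C : Finset (Fin m → Bool)) : ℝ :=
  sInf {x : ℝ | ∃ C' : Finset (Fin m → Bool), C' ⊆ C ∧ C'.Nonempty ∧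
    1 ≤ CL (↑C' : Set (Fin m → Bool)) ∧
    x = (Supp (↑C' : Set (Fin m → Bool))).ncard / (CL (↑C' : Set (Fin m → Bool)) : ℝ)}

lemma sum_choose_le (m k : ℕ) : ∑ i ∈ Finset.Iic k, m.choose i ≤ (m + 1) ^ k := by
  have hIic : ∀ n : ℕ, Finset.Iic n = Finset.range (n + 1) := by
    intro n; ext i; simp [Nat.lt_succ_iff]
  induction k with
  | zero => simp [hIic]
  | succ k ih =>
    rw [hIic] at ih ⊢
    rw [Finset.sum_range_succ]
    have h1 : m.choose (k + 1) ≤ (m + 1) ^ k * m := by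
      calc m.choose (k + 1) ≤ m ^ (k + 1) := Nat.choose_le_pow _ _
        _ = m ^ k * m := by rw [pow_succ]
        _ ≤ (m + 1) ^ k * m := Nat.mul_le_mul_right _ (Nat.pow_le_pow_left (Nat.le_succ m) k)
    calc (∑ i ∈ Finset.range (k + 1), m.choose i) + m.choose (k + 1)
        ≤ (m + 1) ^ k + (m + 1) ^ k * m := Nat.add_le_add ih h1
      _ = (m + 1) ^ (k + 1) := by ring

/-- `|C| ≤ (m+1)^{NRD(C)}`. -/
theorem card_le_pow_nrd {m : ℕ} (C : Finset (Fin m → Bool)) :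
    C.card ≤ (m + 1) ^ NRD (↑C : Set (Fin m → Bool)) := by
  classical
  set k := NRD (↑C : Set (Fin m → Bool)) with hk
  -- the support map
  set f : (Fin m → Bool) → Finset (Fin m) :=
    fun c => Finset.univ.filter (fun i => c i = true) with hfdef
  have hmemf : ∀ (c : Fin m → Bool) (i : Fin m), i ∈ f c ↔ c i = true := by
    intro c i; simp [hfdef]
  have hf : Function.Injective f := by
    intro c d h
    funext i
    have h1 := (hmemf c i).symm.trans (h ▸ hmemf d i)
    cases hc : c i <;> cases hd : d i <;> simp_all
  set A : Finset (Finset (Fin m)) := C.image f with hA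
  set U : Finset (Finset (Fin m)) := A.powerset.image (fun T => T.sup id) with hU
  have hAU : A ⊆ U := by
    intro a ha
    refine Finset.mem_image.2 ⟨{a}, Finset.mem_powerset.2 (Finset.singleton_subset_iff.2 ha), ?_⟩
    simp
  -- every set shattered by U has size at most k
  have hsh : ∀ s ∈ U.shatterer, s.card ≤ k := by
    intro s hs
    rw [Finset.mem_shatterer] at hs
    have hBdd : BddAbove {n | ∃ S : Finset (Fin m), S.card = n ∧
        ∀ j ∈ S, ∃ c ∈ (↑C : Set (Fin m → Bool)), c j = true ∧
          ∀ i ∈ S, i ≠ j → c i = false} := by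
      refine ⟨m, ?_⟩
      rintro x ⟨S, rfl, -⟩
      simpa using S.card_le_univ
    refine le_csSup hBdd ⟨s, rfl, ?_⟩
    intro j hj
    obtain ⟨u, hu, hsu⟩ := hs.exists_inter_eq_singleton hj
    obtain ⟨T, hT, rfl⟩ := Finset.mem_image.1 hu
    have hju : j ∈ T.sup id := by
      have hj' : j ∈ s ∩ T.sup id := by rw [hsu]; exact Finset.mem_singleton_self j
      exact (Finset.mem_inter.1 hj').2
    obtain ⟨a, haT, hja⟩ := Finset.mem_sup.1 hju
    obtain ⟨c, hcC, rfl⟩ := Finset.mem_image.1 (Finset.mem_powerset.1 hT haT)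
    refine ⟨c, Finset.mem_coe.2 hcC, (hmemf c j).1 hja, ?_⟩
    intro i hi hij
    by_contra hci
    have hci' : c i = true := by simpa using hci
    have hiu : i ∈ T.sup id := Finset.mem_sup.2 ⟨f c, haT, (hmemf c i).2 hci'⟩
    have : i ∈ ({j} : Finset (Fin m)) := by
      rw [← hsu]; exact Finset.mem_inter.2 ⟨hi, hiu⟩
    exact hij (Finset.mem_singleton.1 this)
  have hvc : U.vcDim ≤ k := Finset.sup_le fun s hs => hsh s hs
  calc C.card = A.card := (Finset.card_image_of_injective _ hf).symm
    _ ≤ U.card := Finset.card_le_card hAU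
    _ ≤ U.shatterer.card := Finset.card_le_card_shatterer U
    _ ≤ ∑ i ∈ Finset.Iic U.vcDim, (Fintype.card (Fin m)).choose i :=
        Finset.card_shatterer_le_sum_vcDim
    _ ≤ ∑ i ∈ Finset.Iic k, m.choose i := by
        rw [Fintype.card_fin]
        exact Finset.sum_le_sum_of_subset (Finset.Iic_subset_Iic.2 hvc)
    _ ≤ (m + 1) ^ k := sum_choose_le m k

end Paper
end

section
/- For any code C ⊆ {0,1}^m, the number of codewords satisfies |C| ≤ (m+1)^{CL(C)}. -/
/-!
Induct on `|C|` and pick a codeword `e` maximal for the coordinatewise order. Every other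
codeword vanishes at some coordinate `j` with `e j = 1`, so `C \ {e}` is covered by the at most
`m` subcodes `C_j = {c ∈ C | c j = 0}` with `e j = 1`. Appending `(j, e)` to a chain of `C_j`
gives a chain of `C`, so `CL C_j < CL C`, and induction gives
`|C| ≤ 1 + m (m + 1) ^ (CL C - 1) ≤ (m + 1) ^ CL C`.
-/

namespace Paper

open Finset

section Chains

variable {m ℓ : ℕ} {C : Set (Fin m → Bool)}

lemma hasChain_zero (C : Set (Fin m → Bool)) : HasChain C 0 :=
  ⟨Fin.elim0, Fin.elim0, fun i => i.elim0, fun i => i.elim0, fun i => i.elim0,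
    fun i => i.elim0, fun i => i.elim0⟩

lemma HasChain.length_le (h : HasChain C ℓ) : ℓ ≤ m := by
  obtain ⟨a, -, ha, -⟩ := h
  simpa using Fintype.card_le_of_injective a ha

lemma bddAbove_setOf_hasChain (C : Set (Fin m → Bool)) : BddAbove {ℓ | HasChain C ℓ} :=
  ⟨m, fun _ h => h.length_le⟩

lemma hasChain_CL (C : Set (Fin m → Bool)) : HasChain C (CL C) :=
  Nat.sSup_mem ⟨0, hasChain_zero C⟩ (bddAbove_setOf_hasChain C)

lemma HasChain.le_CL (h : HasChain C ℓ) : ℓ ≤ CL C :=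
  le_csSup (bddAbove_setOf_hasChain C) h

lemma HasChain.snoc {P : Set (Fin m → Bool)} {j : Fin m} {e : Fin m → Bool} (h : HasChain P ℓ)
    (hPC : P ⊆ C) (hP : ∀ c ∈ P, c j = false) (heC : e ∈ C) (hej : e j = true) :
    HasChain C (ℓ + 1) := by
  obtain ⟨a, c, ha, hc, hmem, hdiag, hoff⟩ := h
  have ha_ne : j ∉ Set.range a := by
    rintro ⟨i, rfl⟩
    simpa [hP _ (hmem i)] using hdiag i
  have hc_ne : e ∉ Set.range c := by
    rintro ⟨i, rfl⟩
    simp [hP _ (hmem i)] at hej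
  refine ⟨Fin.snoc a j, Fin.snoc c e, Fin.snoc_injective_of_injective ha ha_ne,
    Fin.snoc_injective_of_injective hc hc_ne, fun i => ?_, fun i => ?_, fun i k hik => ?_⟩
  · induction i using Fin.lastCases with
    | last => simpa using heC
    | cast i => simpa using hPC (hmem i)
  · induction i using Fin.lastCases with
    | last => simpa using hej
    | cast i => simpa using hdiag i
  · induction k using Fin.lastCases with
    | last =>
      induction i using Fin.lastCases with
      | last => exact absurd hik (lt_irrefl _)
      | cast i => simpa using hP _ (hmem i)
    | cast k =>
      induction i using Fin.lastCases with
      | last => exact absurd hik (Fin.castSucc_lt_last k).not_gt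
      | cast i => simpa using hoff i k (Fin.castSucc_lt_castSucc_iff.mp hik)

lemma CL_lt_CL_of_forall_eq_false {P : Set (Fin m → Bool)} {j : Fin m} {e : Fin m → Bool}
    (hPC : P ⊆ C) (hP : ∀ c ∈ P, c j = false) (heC : e ∈ C) (hej : e j = true) :
    CL P < CL C :=
  ((hasChain_CL P).snoc hPC hP heC hej).le_CL

end Chains

lemma card_le_one_add_sum_card_filter {ι : Type*} [Fintype ι] {C : Finset (ι → Bool)}
    {e : ι → Bool} (he : Maximal (· ∈ C) e) :
    C.card ≤ 1 + ∑ j with e j = true, (C.filter (· j = false)).card := by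
  classical
  have hcover :
      C.erase e ⊆ (univ.filter (e · = true)).biUnion fun j => C.filter (· j = false) := by
    intro c hc
    obtain ⟨hce, hcC⟩ := mem_erase.1 hc
    have hec : ¬ e ≤ c := fun hle => hce (le_antisymm (he.2 hcC hle) hle)
    obtain ⟨j, hj⟩ := not_forall.1 (mt Pi.le_def.2 hec)
    obtain ⟨hej, hcj⟩ : e j = true ∧ c j = false := by simpa [Bool.le_iff_imp] using hj
    simp only [mem_biUnion, mem_filter, mem_univ, true_and]
    exact ⟨j, hej, hcC, hcj⟩
  calc C.card = (C.erase e).card + 1 := (card_erase_add_one he.1).symm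
    _ ≤ ∑ j with e j = true, (C.filter (· j = false)).card + 1 :=
      Nat.add_le_add_right ((card_le_card hcover).trans card_biUnion_le) 1
    _ = _ := add_comm _ _

lemma one_add_sum_le_pow {ι : Type*} {J : Finset ι} {f : ι → ℕ} {n L : ℕ}
    (hJ : J.card ≤ n) (hf : ∀ j ∈ J, (n + 1) * f j ≤ (n + 1) ^ L) (hL : J.Nonempty → L ≠ 0) :
    1 + ∑ j ∈ J, f j ≤ (n + 1) ^ L := by
  obtain rfl | hJne := J.eq_empty_or_nonempty
  · simpa using Nat.one_le_pow _ _ n.succ_pos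
  refine Nat.le_of_mul_le_mul_left ?_ n.succ_pos
  calc (n + 1) * (1 + ∑ j ∈ J, f j)
        ≤ (n + 1) ^ L + ∑ _j ∈ J, (n + 1) ^ L := by
        rw [mul_add, mul_one, mul_sum]
        exact Nat.add_le_add (Nat.le_self_pow (hL hJne) _) (sum_le_sum hf)
    _ ≤ (n + 1) ^ L + n * (n + 1) ^ L := by
        rw [sum_const, smul_eq_mul]
        gcongr
    _ = (n + 1) * (n + 1) ^ L := by ring

/-- `|C| ≤ (m+1)^{CL(C)}`. -/
theorem card_le_pow_cl {m : ℕ} (C : Finset (Fin m → Bool)) :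
    C.card ≤ (m + 1) ^ CL (↑C : Set (Fin m → Bool)) := by
  induction C using Finset.strongInduction with
  | _ C ih =>
  obtain rfl | ⟨e, he⟩ := C.eq_empty_or_nonempty.imp id Finset.exists_maximal
  · simp
  have hCL_lt {P : Set (Fin m → Bool)} {j : Fin m} (hPC : P ⊆ C) (hP : ∀ c ∈ P, c j = false)
      (hej : e j = true) : CL P < CL (C : Set (Fin m → Bool)) :=
    CL_lt_CL_of_forall_eq_false hPC hP he.1 hej
  refine (card_le_one_add_sum_card_filter he).trans <| one_add_sum_le_pow
    (by simpa using card_filter_le (univ : Finset (Fin m)) _) (fun j hj => ?_)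
    fun ⟨j, hj⟩ => (hCL_lt (Set.empty_subset _) (by simp) (mem_filter.1 hj).2).ne_bot
  have hej : e j = true := (mem_filter.1 hj).2
  set Cj := C.filter (· j = false)
  have hCj : Cj ⊂ C := filter_ssubset.2 ⟨e, he.1, by simp [hej]⟩
  calc (m + 1) * Cj.card ≤ (m + 1) * (m + 1) ^ CL (Cj : Set (Fin m → Bool)) :=
        Nat.mul_le_mul_left _ (ih _ hCj)
    _ ≤ (m + 1) ^ CL (C : Set (Fin m → Bool)) := by
        rw [← pow_succ']
        exact Nat.pow_le_pow_right m.succ_pos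
          (hCL_lt (coe_subset.2 (filter_subset _ _)) (fun c hc => (mem_filter.1 hc).2) hej)

end Paper
end

section
/- Let X_1, …, X_ℓ be independent random variables where X_i takes value 1/p_i with probability p_i and 0 otherwise, and suppose min_i p_i ≥ p. Then for any ε ∈ (0,1), with probability at least 1 − 2·exp(−0.38·ε²·ℓ·p), the sum X_1 + ⋯ + X_ℓ lies in [(1−ε)ℓ, (1+ε)ℓ]. -/
/-!
Chernoff's method. The moment generating function of `Xᵢ` is `1 + pᵢ (exp (t / pᵢ) - 1)`, which is
at most `exp (p₀ (exp (t / p₀) - 1))` because `p ↦ p (exp (t / p) - 1)` is antitone (a perspective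
of the convex function `exp`). So the mgf of the sum is dominated by that of `1 / p₀` times a
Poisson variable of mean `ℓ p₀`, and Markov's inequality at `t = p₀ log (1 ± ε)` bounds the two
tails by `exp (-ℓ p₀ h (±ε))` with `h x = (1 + x) log (1 + x) - x`. Finally `h ε ≥ 0.38 ε²` and
`h (-ε) ≥ ε² / 2` on `(0, 1)`.
-/

open MeasureTheory ProbabilityTheory Real Set

lemma sq_div_two_le_one_sub_mul_log_one_sub_add {x : ℝ} (hx₀ : 0 ≤ x) (hx₁ : x < 1) :
    x ^ 2 / 2 ≤ (1 - x) * log (1 - x) + x := by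
  let g : ℝ → ℝ := fun y => (1 - y) * log (1 - y) + y - y ^ 2 / 2
  have hg : ∀ y < 1, HasDerivAt g (-log (1 - y) - y) y := fun y hy =>
    ((((hasDerivAt_mul_log (by linarith : 1 - y ≠ 0)).comp y
      ((hasDerivAt_id y).const_sub 1)).add (hasDerivAt_id y)).sub
      ((hasDerivAt_pow 2 y).div_const 2)).congr_deriv (by simp)
  have hmono : MonotoneOn g (Iio 1) :=
    monotoneOn_of_hasDerivWithinAt_nonneg (convex_Iio 1)
      (fun y hy => (hg y hy).continuousAt.continuousWithinAt)
      (fun y hy => (hg y (by simpa using hy)).hasDerivWithinAt)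
      (fun y hy => by
        have := log_le_sub_one_of_pos (sub_pos.2 (by simpa using hy))
        linarith)
  have := hmono (by norm_num : (0:ℝ) ∈ Iio 1) hx₁ hx₀
  simp only [g] at this
  norm_num at this
  linarith

lemma nonneg_of_monotoneOn_of_concaveOn {f : ℝ → ℝ} {a b c x : ℝ} (hab : a ≤ b) (hbc : b ≤ c)
    (hmono : MonotoneOn f (Icc a b)) (hconc : ConcaveOn ℝ (Icc b c) f) (ha : 0 ≤ f a)
    (hc : 0 ≤ f c) (hx : x ∈ Icc a c) : 0 ≤ f x := by
  have hb : 0 ≤ f b := ha.trans (hmono (left_mem_Icc.2 hab) (right_mem_Icc.2 hab) hab)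
  rcases le_total x b with hxb | hbx
  · exact ha.trans (hmono (left_mem_Icc.2 hab) ⟨hx.1, hxb⟩ hx.1)
  · refine (le_min hb hc).trans (hconc.ge_on_segment (left_mem_Icc.2 hbc)
      (right_mem_Icc.2 hbc) ?_)
    rw [segment_eq_Icc hbc]
    exact ⟨hbx, hx.2⟩

lemma mul_sq_le_one_add_mul_log_one_add_sub {x : ℝ} (hx₀ : 0 ≤ x) (hx₁ : x ≤ 1) :
    0.38 * x ^ 2 ≤ (1 + x) * log (1 + x) - x := by
  let h : ℝ → ℝ := fun y => (1 + y) * log (1 + y) - y - 0.38 * y ^ 2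
  let h' : ℝ → ℝ := fun y => log (1 + y) - 0.76 * y
  have hh : ∀ y, -1 < y → HasDerivAt h (h' y) y := fun y hy =>
    ((((hasDerivAt_mul_log (by linarith : 1 + y ≠ 0)).comp_const_add 1 y).sub
      (hasDerivAt_id y)).sub ((hasDerivAt_pow 2 y).const_mul 0.38)).congr_deriv
      (by simp [h']; ring)
  have hh' : ∀ y, -1 < y → HasDerivAt h' ((1 + y)⁻¹ - 0.76) y := fun y hy =>
    ((((hasDerivAt_id y).const_add 1).log (by simp; linarith)).sub
      ((hasDerivAt_id y).const_mul 0.76)).congr_deriv (by simp)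
  have hcont : ContinuousOn h (Ici 0) :=
    fun y hy => (hh y (by linarith [mem_Ici.1 hy])).continuousAt.continuousWithinAt
  -- `h'' y = (1 + y)⁻¹ - 0.76` changes sign at `y = 6/19`, and `h' ≥ 0` up to there
  have hmono : MonotoneOn h (Icc 0 (6/19)) := by
    refine monotoneOn_of_hasDerivWithinAt_nonneg (f' := h') (convex_Icc _ _)
      (hcont.mono Icc_subset_Ici_self) (fun y hy => ?_) (fun y hy => ?_) <;>
      rw [interior_Icc] at hy
    · exact (hh y (by linarith [hy.1])).hasDerivWithinAt
    · have hlog := one_sub_inv_le_log_of_pos (by linarith [hy.1] : 0 < 1 + y)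
      have : (1 + y)⁻¹ ≤ 1 - 0.76 * y := by
        rw [inv_le_iff_one_le_mul₀ (by linarith [hy.1])]
        nlinarith [hy.1, hy.2]
      simp only [h']; linarith
  have hconc : ConcaveOn ℝ (Icc (6/19) 1) h := by
    refine concaveOn_of_hasDerivWithinAt2_nonpos (f' := h') (f'' := fun y => (1 + y)⁻¹ - 0.76)
      (convex_Icc _ _)
      (hcont.mono (Icc_subset_Ici_self.trans (Ici_subset_Ici.2 (by norm_num))))
      (fun y hy => ?_) (fun y hy => ?_) (fun y hy => ?_) <;> rw [interior_Icc] at hy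
    · exact (hh y (by linarith [hy.1])).hasDerivWithinAt
    · exact (hh' y (by linarith [hy.1])).hasDerivWithinAt
    · have : (1 + y)⁻¹ ≤ 0.76 := by
        rw [inv_le_iff_one_le_mul₀ (by linarith [hy.1])]
        linarith [hy.1]
      linarith
  -- the constant `0.38` is nearly tight here: `h 1 = 2 log 2 - 1.38 ≈ 0.006`
  have h_one : 0 ≤ h 1 := by
    have := log_two_gt_d9
    norm_num [h]; linarith
  have := nonneg_of_monotoneOn_of_concaveOn (by norm_num) (by norm_num) hmono hconc
    (by simp [h]) h_one ⟨hx₀, hx₁⟩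
  simp only [h] at this
  linarith

lemma mul_exp_div_sub_one_le_of_le {q p t : ℝ} (hq : 0 < q) (hqp : q ≤ p) :
    p * (exp (t / p) - 1) ≤ q * (exp (t / q) - 1) := by
  have hp : 0 < p := hq.trans_le hqp
  have hconv := convexOn_exp.2 (mem_univ (t / q)) (mem_univ 0) (div_nonneg hq.le hp.le)
    (sub_nonneg.2 ((div_le_one hp).2 hqp)) (add_sub_cancel _ _)
  have hcomb : (q / p) • (t / q) + (1 - q / p) • (0 : ℝ) = t / p := by
    simp only [smul_eq_mul, mul_zero, add_zero]; field_simp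
  rw [hcomb, smul_eq_mul, smul_eq_mul, exp_zero, mul_one] at hconv
  calc p * (exp (t / p) - 1) ≤ p * (q / p * exp (t / q) + (1 - q / p) - 1) := by gcongr
    _ = q * (exp (t / q) - 1) := by field_simp; ring

section TwoPoint

variable {Ω : Type*} [MeasurableSpace Ω] {μ : Measure Ω} [IsProbabilityMeasure μ] {X : Ω → ℝ}
  {a q : ℝ}

lemma nonneg_of_measure_eq_ofReal_one_sub
    (hzero : μ {ω | X ω = 0} = ENNReal.ofReal (1 - q)) : 0 ≤ q := by
  have := ENNReal.ofReal_le_one.1 (hzero ▸ prob_le_one)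
  linarith

lemma ae_eq_or_eq_zero_of_measure_eq (hX : Measurable X) (ha : a ≠ 0)
    (hone : μ {ω | X ω = a} = ENNReal.ofReal q)
    (hzero : μ {ω | X ω = 0} = ENNReal.ofReal (1 - q)) :
    ∀ᵐ ω ∂μ, X ω = a ∨ X ω = 0 := by
  have hq₁ : q ≤ 1 := ENNReal.ofReal_le_one.1 (hone ▸ prob_le_one)
  have hdisj : Disjoint {ω | X ω = a} {ω | X ω = 0} :=
    Set.disjoint_left.2 fun ω h₁ h₀ => ha (h₁.symm.trans h₀)
  have hunion : μ ({ω | X ω = a} ∪ {ω | X ω = 0}) = 1 := by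
    rw [measure_union hdisj (hX (measurableSet_singleton 0)), hone, hzero,
      ← ENNReal.ofReal_add (nonneg_of_measure_eq_ofReal_one_sub hzero) (by linarith)]
    simp
  exact mem_ae_iff.2 ((prob_compl_eq_zero_iff ((hX (measurableSet_singleton a)).union
    (hX (measurableSet_singleton 0)))).2 hunion)

lemma exp_mul_ae_eq_of_measure_eq (hX : Measurable X) (ha : a ≠ 0)
    (hone : μ {ω | X ω = a} = ENNReal.ofReal q)
    (hzero : μ {ω | X ω = 0} = ENNReal.ofReal (1 - q)) (t : ℝ) :
    (fun ω => exp (t * X ω)) =ᵐ[μ]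
      fun ω => 1 + {ω | X ω = a}.indicator (fun _ => exp (t * a) - 1) ω := by
  filter_upwards [ae_eq_or_eq_zero_of_measure_eq hX ha hone hzero] with ω hω
  rcases hω with h | h <;> simp [h, ha.symm]

lemma integrable_exp_mul_of_measure_eq (hX : Measurable X) (ha : a ≠ 0)
    (hone : μ {ω | X ω = a} = ENNReal.ofReal q)
    (hzero : μ {ω | X ω = 0} = ENNReal.ofReal (1 - q)) (t : ℝ) :
    Integrable (fun ω => exp (t * X ω)) μ :=
  ((integrable_const 1).add ((integrable_const _).indicator
    (hX (measurableSet_singleton a)))).congr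
    (exp_mul_ae_eq_of_measure_eq hX ha hone hzero t).symm

lemma mgf_eq_of_measure_eq (hX : Measurable X) (ha : a ≠ 0)
    (hone : μ {ω | X ω = a} = ENNReal.ofReal q)
    (hzero : μ {ω | X ω = 0} = ENNReal.ofReal (1 - q)) (t : ℝ) :
    mgf X μ t = 1 + q * (exp (t * a) - 1) := by
  have hA : MeasurableSet {ω | X ω = a} := hX (measurableSet_singleton a)
  rw [mgf, integral_congr_ae (exp_mul_ae_eq_of_measure_eq hX ha hone hzero t),
    integral_add (integrable_const 1) ((integrable_const _).indicator hA),
    integral_indicator_const _ hA, measureReal_def, hone,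
    ENNReal.toReal_ofReal (nonneg_of_measure_eq_ofReal_one_sub hzero)]
  simp

end TwoPoint

section Chernoff

variable {Ω : Type*} [MeasurableSpace Ω] {μ : Measure Ω}

lemma mgf_sum_le_of_measure_eq [IsProbabilityMeasure μ] {ι : Type*} [Fintype ι]
    {X : ι → Ω → ℝ} {p : ι → ℝ} {p₀ : ℝ} (hp₀ : 0 < p₀) (hp : ∀ i, p₀ ≤ p i)
    (hmeas : ∀ i, Measurable (X i)) (hindep : iIndepFun X μ)
    (hone : ∀ i, μ {ω | X i ω = 1 / p i} = ENNReal.ofReal (p i))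
    (hzero : ∀ i, μ {ω | X i ω = 0} = ENNReal.ofReal (1 - p i)) (t : ℝ) :
    mgf (∑ i, X i) μ t ≤ exp (Fintype.card ι * p₀ * (exp (t / p₀) - 1)) := by
  have hfactor : ∀ i, mgf (X i) μ t ≤ exp (p₀ * (exp (t / p₀) - 1)) := fun i => by
    have hpi : 0 < p i := hp₀.trans_le (hp i)
    rw [mgf_eq_of_measure_eq (hmeas i) (one_div_pos.2 hpi).ne' (hone i) (hzero i), mul_one_div]
    calc 1 + p i * (exp (t / p i) - 1) ≤ exp (p i * (exp (t / p i) - 1)) := by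
          linarith [add_one_le_exp (p i * (exp (t / p i) - 1))]
      _ ≤ exp (p₀ * (exp (t / p₀) - 1)) := exp_le_exp.2 (mul_exp_div_sub_one_le_of_le hp₀ (hp i))
  calc mgf (∑ i, X i) μ t = ∏ i, mgf (X i) μ t := hindep.mgf_sum hmeas _
    _ ≤ ∏ _i : ι, exp (p₀ * (exp (t / p₀) - 1)) :=
        Finset.prod_le_prod (fun i _ => mgf_nonneg) fun i _ => hfactor i
    _ = exp (Fintype.card ι * p₀ * (exp (t / p₀) - 1)) := by
        rw [Finset.prod_const, Finset.card_univ, ← exp_nat_mul, mul_assoc]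

variable [IsFiniteMeasure μ] {S : Ω → ℝ} {n c ε : ℝ}

lemma measureReal_ge_le_of_mgf_le (hc : 0 < c) (hε : 0 ≤ ε)
    (hint : ∀ t, Integrable (fun ω => exp (t * S ω)) μ)
    (hmgf : ∀ t, mgf S μ t ≤ exp (n * c * (exp (t / c) - 1))) :
    μ.real {ω | (1 + ε) * n ≤ S ω} ≤ exp (-(n * c) * ((1 + ε) * log (1 + ε) - ε)) := by
  set t := c * log (1 + ε)
  have ht : t / c = log (1 + ε) := mul_div_cancel_left₀ _ hc.ne'
  calc μ.real {ω | (1 + ε) * n ≤ S ω} ≤ exp (-t * ((1 + ε) * n)) * mgf S μ t :=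
        measure_ge_le_exp_mul_mgf _ (mul_nonneg hc.le (log_nonneg (by linarith))) (hint t)
    _ ≤ exp (-t * ((1 + ε) * n)) * exp (n * c * (exp (t / c) - 1)) := by gcongr; exact hmgf t
    _ = exp (-(n * c) * ((1 + ε) * log (1 + ε) - ε)) := by
        rw [← exp_add, ht, exp_log (by linarith)]; simp only [t]; ring_nf

lemma measureReal_le_le_of_mgf_le (hc : 0 < c) (hε₀ : 0 ≤ ε) (hε₁ : ε < 1)
    (hint : ∀ t, Integrable (fun ω => exp (t * S ω)) μ)
    (hmgf : ∀ t, mgf S μ t ≤ exp (n * c * (exp (t / c) - 1))) :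
    μ.real {ω | S ω ≤ (1 - ε) * n} ≤ exp (-(n * c) * ((1 - ε) * log (1 - ε) + ε)) := by
  set t := c * log (1 - ε)
  have ht : t / c = log (1 - ε) := mul_div_cancel_left₀ _ hc.ne'
  calc μ.real {ω | S ω ≤ (1 - ε) * n} ≤ exp (-t * ((1 - ε) * n)) * mgf S μ t :=
        measure_le_le_exp_mul_mgf _
          (mul_nonpos_of_nonneg_of_nonpos hc.le (log_nonpos (by linarith) (by linarith)))
          (hint t)
    _ ≤ exp (-t * ((1 - ε) * n)) * exp (n * c * (exp (t / c) - 1)) := by gcongr; exact hmgf t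
    _ = exp (-(n * c) * ((1 - ε) * log (1 - ε) + ε)) := by
        rw [← exp_add, ht, exp_log (by linarith)]; simp only [t]; ring_nf

end Chernoff

lemma one_sub_add_le_measureReal_mem_Icc {Ω : Type*} [MeasurableSpace Ω] {μ : Measure Ω}
    [IsProbabilityMeasure μ] (S : Ω → ℝ) (a b : ℝ) :
    1 - (μ.real {ω | S ω ≤ a} + μ.real {ω | b ≤ S ω}) ≤ μ.real {ω | S ω ∈ Icc a b} := by
  have hcover : univ ⊆ {ω | S ω ∈ Icc a b} ∪ ({ω | S ω ≤ a} ∪ {ω | b ≤ S ω}) := by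
    intro ω _
    by_cases h₁ : S ω ≤ a
    · exact Or.inr (Or.inl h₁)
    by_cases h₂ : b ≤ S ω
    · exact Or.inr (Or.inr h₂)
    exact Or.inl ⟨(not_le.1 h₁).le, (not_le.1 h₂).le⟩
  have := calc 1 = μ.real univ := probReal_univ.symm
    _ ≤ μ.real ({ω | S ω ∈ Icc a b} ∪ ({ω | S ω ≤ a} ∪ {ω | b ≤ S ω})) := measureReal_mono hcover
    _ ≤ μ.real {ω | S ω ∈ Icc a b} + (μ.real {ω | S ω ≤ a} + μ.real {ω | b ≤ S ω}) :=
        (measureReal_union_le _ _).trans (by gcongr; exact measureReal_union_le _ _)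
  linarith

/-- concentration bound for independent scaled Bernoulli variables. -/
theorem concentration_bound {Ω : Type*} [MeasurableSpace Ω]
    (μ : Measure Ω) [IsProbabilityMeasure μ]
    (ℓ : ℕ) (X : Fin ℓ → Ω → ℝ) (p : Fin ℓ → ℝ) (p₀ : ℝ) (ε : ℝ)
    (hε : ε ∈ Set.Ioo (0 : ℝ) 1) (hp₀ : 0 < p₀) (hp : ∀ i, p₀ ≤ p i)
    (hmeas : ∀ i, Measurable (X i))
    (hindep : iIndepFun X μ)
    (hone : ∀ i, μ {ω | X i ω = 1 / p i} = ENNReal.ofReal (p i))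
    (hzero : ∀ i, μ {ω | X i ω = 0} = ENNReal.ofReal (1 - p i)) :
    ENNReal.ofReal (1 - 2 * Real.exp (-0.38 * ε ^ 2 * ℓ * p₀)) ≤
      μ {ω | (∑ i, X i ω) ∈ Set.Icc ((1 - ε) * ℓ) ((1 + ε) * ℓ)} := by
  obtain ⟨hε₀, hε₁⟩ := hε
  have hint : ∀ t, Integrable (fun ω => exp (t * (∑ i, X i) ω)) μ := fun t =>
    hindep.integrable_exp_mul_sum hmeas fun i _ => integrable_exp_mul_of_measure_eq (hmeas i)
      (one_div_pos.2 (hp₀.trans_le (hp i))).ne' (hone i) (hzero i) t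
  have hmgf : ∀ t, mgf (∑ i, X i) μ t ≤ exp (ℓ * p₀ * (exp (t / p₀) - 1)) := by
    simpa using mgf_sum_le_of_measure_eq hp₀ hp hmeas hindep hone hzero
  have hrate : ∀ r, 0.38 * ε ^ 2 ≤ r → exp (-(ℓ * p₀) * r) ≤ exp (-0.38 * ε ^ 2 * ℓ * p₀) :=
    fun r hr => exp_le_exp.2 (by nlinarith [mul_nonneg (Nat.cast_nonneg ℓ) hp₀.le])
  have hupper := (measureReal_ge_le_of_mgf_le hp₀ hε₀.le hint hmgf).trans
    (hrate _ (mul_sq_le_one_add_mul_log_one_add_sub hε₀.le hε₁.le))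
  have hlower := (measureReal_le_le_of_mgf_le hp₀ hε₀.le hε₁ hint hmgf).trans
    (hrate _ (by nlinarith [sq_div_two_le_one_sub_mul_log_one_sub_add hε₀.le hε₁]))
  have hunion := one_sub_add_le_measureReal_mem_Icc (μ := μ) (∑ i, X i) ((1 - ε) * ℓ) ((1 + ε) * ℓ)
  simp only [Finset.sum_apply] at hunion hupper hlower
  exact ENNReal.ofReal_le_of_le_toReal (by rw [← measureReal_def]; linarith)
end

section
/- Let G = (V, E) be a finite graph and let S ⊆ 2^E be the set system of all cuts of G, i.e., S = {E_T : T ⊆ V} where E_T is the set of edges with exactly one endpoint in T. Then CL(S) ≤ |V|. -/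
open Matrix

/-- the chain length of the set system of cuts of a finite graph is at most
the number of vertices. Stated directly: every chain in the cut set system has length at
most `|V|`. -/
theorem cl_cuts_le_card_verts {V : Type*} [Fintype V] (G : SimpleGraph V)
    (S : Set (Set (Sym2 V)))
    (hS : S = {E | ∃ T : Set V,
      E = {e ∈ G.edgeSet | ∃ u v : V, e = s(u, v) ∧ u ∈ T ∧ v ∉ T}})
    (ℓ : ℕ) (a : Fin ℓ → Sym2 V) (c : Fin ℓ → Set (Sym2 V))
    (ha : Function.Injective a) (hc : Function.Injective c)
    (hcS : ∀ i, c i ∈ S) (hmem : ∀ i, a i ∈ c i)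
    (hchain : ∀ i j : Fin ℓ, i < j → a j ∉ c i) :
    ℓ ≤ Fintype.card V := by
  classical
  -- choose T i with c i the cut of T i
  have hT : ∀ i, ∃ T : Set V,
      c i = {e ∈ G.edgeSet | ∃ u v : V, e = s(u, v) ∧ u ∈ T ∧ v ∉ T} := by
    intro i; have := hcS i; rw [hS] at this; exact this
  choose T hTc using hT
  -- endpoints of a j
  set u : Fin ℓ → V := fun j => (a j).out.1 with hu
  set v : Fin ℓ → V := fun j => (a j).out.2 with hv
  have haout : ∀ j, a j = s(u j, v j) := by
    intro j; rw [hu, hv]; exact ((a j).out_eq).symm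
  have hane : ∀ j, u j ≠ v j := by
    intro j
    have hedge : a j ∈ G.edgeSet := ((hTc j) ▸ hmem j).1
    rw [haout j, SimpleGraph.mem_edgeSet] at hedge
    exact hedge.ne
  -- indicator function of T i
  set f : Fin ℓ → (V → ZMod 2) := fun i x => if x ∈ T i then 1 else 0 with hf
  -- key: membership in cut vs parity
  have key : ∀ i j, f i (u j) + f i (v j) = if a j ∈ c i then 1 else 0 := by
    intro i j
    have hedge : a j ∈ G.edgeSet := ((hTc j) ▸ hmem j).1
    have hmemiff : a j ∈ c i ↔ ((u j ∈ T i ∧ v j ∉ T i) ∨ (v j ∈ T i ∧ u j ∉ T i)) := by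
      rw [hTc i]
      constructor
      · rintro ⟨-, x, y, hxy, hx, hy⟩
        rw [haout j, Sym2.eq_iff] at hxy
        rcases hxy with ⟨h1, h2⟩ | ⟨h1, h2⟩
        · left; exact ⟨h1.symm ▸ hx, h2.symm ▸ hy⟩
        · right; exact ⟨h2.symm ▸ hx, h1.symm ▸ hy⟩
      · rintro (⟨h1, h2⟩ | ⟨h1, h2⟩)
        · exact ⟨hedge, u j, v j, haout j, h1, h2⟩
        · exact ⟨hedge, v j, u j, by rw [haout j, Sym2.eq_swap], h1, h2⟩
    rw [hf]
    by_cases h1 : u j ∈ T i <;> by_cases h2 : v j ∈ T i <;>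
      simp [h1, h2, hmemiff] <;> decide
  -- the matrix of values
  set A : Matrix (Fin ℓ) (Fin ℓ) (ZMod 2) :=
    fun i j => if a j ∈ c i then 1 else 0 with hA
  have hdiag : ∀ i, A i i = 1 := by intro i; simp [hA, hmem i]
  have htri : A.BlockTriangular OrderDual.toDual := by
    intro i j hij
    have : (i : Fin ℓ) < j := hij
    simp [hA, hchain i j this]
  have hdet : A.det = 1 := by
    rw [Matrix.det_of_lowerTriangular A htri]
    simp [hdiag]
  have hunit : IsUnit A := by
    rw [Matrix.isUnit_iff_isUnit_det, hdet]; exact isUnit_one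
  have hrows : LinearIndependent (ZMod 2) (fun i => A i) :=
    Matrix.linearIndependent_rows_iff_isUnit.2 hunit
  -- the linear map evaluating at endpoints
  set M : (V → ZMod 2) →ₗ[ZMod 2] (Fin ℓ → ZMod 2) :=
    LinearMap.pi (fun j => (LinearMap.proj (u j) : (V → ZMod 2) →ₗ[ZMod 2] ZMod 2) + LinearMap.proj (v j)) with hM
  have hcomp : (M ∘ f) = fun i => A i := by
    funext i j
    exact key i j
  have hfind : LinearIndependent (ZMod 2) f :=
    LinearIndependent.of_comp M (hcomp ▸ hrows)
  have := hfind.fintype_card_le_finrank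
  simpa [Module.finrank_pi] using this
end
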